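/- Let e_y : Y → Z_y and d_x : Z_x → X be Lipschitz continuous maps with Lipschitz constants L_y and L_x on normed spaces. Suppose: (i) ‖e_y(d_y(z_y)) − z_y‖ ≤ ξ_y for all z_y ∈ Z_y; (ii) ‖M† M z_x − z_x‖ ≤ ξ_M for all z_x ∈ Z_x where M† is a bounded linear map; (iii) ‖d_x(e_x(x)) − x‖ ≤ ξ_x for all x ∈ X; and (iv) ‖ỹ − y‖ ≤ δ where ỹ = d_y(M(e_x(x))). Then for x̂ = d_x(M†(e_y(y))), the reconstruction error satisfies ‖x̂ − x‖ ≤ L_x(‖M†‖(L_y δ + ξ_y) + ξ_M) + ξ_x. -/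
import Mathlib

/-- Error bound for the paired autoencoder reconstruction
`x̂ = d_x(M†(e_y(y)))`:
`‖x̂ - x‖ ≤ L_x (‖M†‖ (L_y δ + ξ_y) + ξ_M) + ξ_x`. -/
theorem paired_autoencoder_error_bound
    {X Y Zx Zy : Type*}
    [NormedAddCommGroup X] [NormedSpace ℝ X]
    [NormedAddCommGroup Y] [NormedSpace ℝ Y]
    [NormedAddCommGroup Zx] [NormedSpace ℝ Zx]
    [NormedAddCommGroup Zy] [NormedSpace ℝ Zy]
    (ex : X → Zx) (dx : Zx → X) (ey : Y → Zy) (dy : Zy → Y)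
    (M : Zx →L[ℝ] Zy) (Mdag : Zy →L[ℝ] Zx)
    (Lx Ly : ℝ) (hLx0 : 0 ≤ Lx) (hLy0 : 0 ≤ Ly)
    (hLipdx : ∀ a b : Zx, ‖dx a - dx b‖ ≤ Lx * ‖a - b‖)
    (hLipey : ∀ a b : Y, ‖ey a - ey b‖ ≤ Ly * ‖a - b‖)
    (ξx ξy ξM δ : ℝ) (hξx0 : 0 ≤ ξx) (hξy0 : 0 ≤ ξy) (hξM0 : 0 ≤ ξM) (hδ0 : 0 ≤ δ)
    (hy : ∀ zy : Zy, ‖ey (dy zy) - zy‖ ≤ ξy)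
    (hM : ∀ zx : Zx, ‖Mdag (M zx) - zx‖ ≤ ξM)
    (hx : ∀ x : X, ‖dx (ex x) - x‖ ≤ ξx)
    (x : X) (y : Y)
    (hδ : ‖dy (M (ex x)) - y‖ ≤ δ) :
    ‖dx (Mdag (ey y)) - x‖ ≤ Lx * (‖Mdag‖ * (Ly * δ + ξy) + ξM) + ξx := by
  have h1 : ‖ey y - M (ex x)‖ ≤ Ly * δ + ξy := by
    calc ‖ey y - M (ex x)‖
        ≤ ‖ey y - ey (dy (M (ex x)))‖ + ‖ey (dy (M (ex x))) - M (ex x)‖ :=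
          norm_sub_le_norm_sub_add_norm_sub _ _ _
      _ ≤ Ly * δ + ξy := by
          have h2 := hLipey y (dy (M (ex x)))
          have h3 : ‖y - dy (M (ex x))‖ ≤ δ := by rwa [norm_sub_rev]
          have := hy (M (ex x))
          nlinarith
  have h4 : ‖Mdag (ey y) - ex x‖ ≤ ‖Mdag‖ * (Ly * δ + ξy) + ξM := by
    calc ‖Mdag (ey y) - ex x‖
        ≤ ‖Mdag (ey y) - Mdag (M (ex x))‖ + ‖Mdag (M (ex x)) - ex x‖ :=
          norm_sub_le_norm_sub_add_norm_sub _ _ _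
      _ ≤ ‖Mdag‖ * (Ly * δ + ξy) + ξM := by
          have h5 : ‖Mdag (ey y) - Mdag (M (ex x))‖ ≤ ‖Mdag‖ * ‖ey y - M (ex x)‖ := by
            rw [← map_sub]; exact Mdag.le_opNorm _
          have := hM (ex x)
          nlinarith [norm_nonneg Mdag]
  calc ‖dx (Mdag (ey y)) - x‖
      ≤ ‖dx (Mdag (ey y)) - dx (ex x)‖ + ‖dx (ex x) - x‖ :=
        norm_sub_le_norm_sub_add_norm_sub _ _ _
    _ ≤ Lx * (‖Mdag‖ * (Ly * δ + ξy) + ξM) + ξx := by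
        have := hLipdx (Mdag (ey y)) (ex x)
        have := hx x
        nlinarith
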